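/- arXiv:1207.0578 — 3 statements merged into one kernel-verified Lean document; each statement's English description precedes it below -/
import Mathlib

section
/- If two closed planar segments {u,v} and {s,t} (with u,v,s,t distinct points, no three of them collinear) intersect at a point p interior to both segments, then the four points u, s, v, t are in convex position and form a convex quadrilateral whose diagonals are {u,v} and {s,t}; consequently the four side segments {s,u}, {s,v}, {t,v}, {t,u} pairwise have no common point interior to both segments. -/
noncomputable section
open Real EuclideanGeometry MeasureTheory
open scoped Classical ENNReal

/-- The Euclidean plane. -/
abbrev Plane := EuclideanSpace ℝ (Fin 2)

/-- Cyclic successor of an index (0-indexed version of `i + 1` modulo `n`). -/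
def nxt {n : ℕ} (i : Fin n) : Fin n :=
  ⟨(i.1 + 1) % n, Nat.mod_lt _ (Nat.lt_of_le_of_lt (Nat.zero_le _) i.2)⟩

/-- Cyclic predecessor of an index (0-indexed version of `i - 1` modulo `n`). -/
def prv {n : ℕ} (i : Fin n) : Fin n :=
  ⟨(i.1 + (n - 1)) % n, Nat.mod_lt _ (Nat.lt_of_le_of_lt (Nat.zero_le _) i.2)⟩

/-- Two closed segments `[a,b]` and `[c,d]` intersect: they have a common point
interior to both segments. -/
def segsCross (a b c d : Plane) : Prop :=
  ∃ p : Plane, p ∈ openSegment ℝ a b ∧ p ∈ openSegment ℝ c d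

/-- No three (distinct) points of `V` are collinear. -/
def noThreeCollinear (V : Set Plane) : Prop :=
  ∀ u ∈ V, ∀ v ∈ V, ∀ w ∈ V, u ≠ v → u ≠ w → v ≠ w →
    ¬ Collinear ℝ ({u, v, w} : Set Plane)

/-- The set of (undirected) edges of the Hamiltonian cycle `C(x)` induced by the
permutation `x`. -/
def tourEdges {n : ℕ} (x : Fin n → Plane) : Set (Sym2 Plane) :=
  {e | ∃ i : Fin n, e = Sym2.mk (x i) (x (nxt i))}

/-- The tour `C(x)` is intersection-free: no two of its edges intersect. -/
def intersectionFree {n : ℕ} (x : Fin n → Plane) : Prop :=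
  ∀ i j : Fin n, Sym2.mk (x i) (x (nxt i)) ≠ Sym2.mk (x j) (x (nxt j)) →
    ¬ segsCross (x i) (x (nxt i)) (x j) (x (nxt j))

/-- The inversion (2-opt) operation: reverse the subsequence between positions
`min i j` and `max i j`. -/
def invop {α : Type*} {n : ℕ} (i j : Fin n) (x : Fin n → α) : Fin n → α :=
  fun p =>
    if h : (min i j).1 ≤ p.1 ∧ p.1 ≤ (max i j).1 then
      x ⟨(min i j).1 + (max i j).1 - p.1, by
        obtain ⟨h1, h2⟩ := h
        have := (max i j).2
        omega⟩
    else x p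

/-- The jump operation: move the element in position `i` into position `j`,
shifting the intermediate elements accordingly. -/
def jmp {α : Type*} {n : ℕ} (i j : Fin n) (x : Fin n → α) : Fin n → α :=
  fun p =>
    if i ≤ j then
      if p < i then x p
      else if h : p.1 < j.1 then x ⟨p.1 + 1, by have := j.2; omega⟩
      else if p = j then x i
      else x p
    else
      if p < j then x p
      else if p = j then x i
      else if h : p.1 ≤ i.1 then x ⟨p.1 - 1, by have := p.2; omega⟩
      else x p

/-- The fitness of a permutation: the total Euclidean length of the tour `C(x)`. -/
def fitness {n : ℕ} (x : Fin n → Plane) : ℝ :=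
  ∑ i : Fin n, dist (x i) (x (nxt i))

/-- `x` is a permutation (an enumeration without repetitions) of the point set `V`. -/
def isPermOf {n : ℕ} (x : Fin n → Plane) (V : Set Plane) : Prop :=
  Function.Injective x ∧ Set.range x = V

/-- `x` is an optimal permutation of `V`: it minimizes the fitness among all
permutations of `V`. -/
def IsOptimalPerm {n : ℕ} (V : Set Plane) (x : Fin n → Plane) : Prop :=
  isPermOf x V ∧ ∀ y : Fin n → Plane, isPermOf y V → fitness x ≤ fitness y

/-- `hull(V)`: the set of points of `V` that are vertices of the convex hull of `V`. -/
def hullVertices (V : Set Plane) : Set Plane :=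
  {v | v ∈ V ∧ v ∉ convexHull ℝ (V \ {v})}

/-- `V` is angle-bounded by `ε`: every angle formed by three distinct points of `V`
lies strictly between `ε` and `π - ε`. -/
def angleBounded (ε : ℝ) (V : Set Plane) : Prop :=
  ∀ u ∈ V, ∀ v ∈ V, ∀ w ∈ V, u ≠ v → u ≠ w → v ≠ w →
    ε < ∠ u v w ∧ ∠ u v w < Real.pi - ε

/-- The set of pairwise distances between distinct points of `V`. -/
def pairDists (V : Set Plane) : Set ℝ :=
  {d | ∃ u ∈ V, ∃ v ∈ V, u ≠ v ∧ d = dist u v}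

/-- `γ(ε) = (d_max/d_min - 1) · cos ε / (1 - cos ε)`. -/
def gammaF (ε dmax dmin : ℝ) : ℝ :=
  (dmax / dmin - 1) * (Real.cos ε / (1 - Real.cos ε))

/-!
The crossing point `p` lies on the line `st` strictly between `u` and `v`, so `u` and `v` are
strictly on opposite sides of the line `st`; symmetrically `s` and `t` are strictly on opposite
sides of the line `uv`. The convex hull of `s`, `t`, `v` stays in the closed half-plane of `v`,
so it misses `u`, and likewise for the other three vertices. The open sides `su` and `tv` lie in
the two open half-planes bounded by the line `st`, so they are disjoint; two adjacent sides
meeting in their interiors would make three of the points collinear.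
-/

section Sides

variable {V : Type*} [AddCommGroup V] [Module ℝ V] {s : AffineSubspace ℝ V} {a b p x y : V}

theorem wbtw_of_mem_openSegment (h : p ∈ openSegment ℝ x y) : Wbtw ℝ x p y :=
  mem_segment_iff_wbtw.1 (openSegment_subset_segment ℝ x y h)

namespace AffineSubspace

theorem sSameSide_of_mem_openSegment (ha : a ∈ s) (hx : x ∉ s)
    (hp : p ∈ openSegment ℝ a x) : s.SSameSide p x := by
  rw [openSegment_eq_image_lineMap] at hp
  obtain ⟨r, ⟨hr, -⟩, rfl⟩ := hp
  exact sSameSide_lineMap_left ha hx hr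

theorem sOppSide_of_mem_openSegment (hpxy : p ∈ openSegment ℝ x y) (hp : p ∈ s)
    (hx : x ∉ s) : s.SOppSide x y := by
  have hpx : p ≠ x := fun h => hx (h ▸ hp)
  have hpy : p ≠ y := by
    rintro rfl
    exact hpx (right_mem_openSegment_iff.1 hpxy).symm
  exact Sbtw.sOppSide_of_notMem_of_mem ⟨wbtw_of_mem_openSegment hpxy, hpx, hpy⟩ hx hp

namespace SOppSide

theorem notMem_convexHull_triple (h : s.SOppSide x y) (ha : a ∈ s) (hb : b ∈ s) :
    x ∉ convexHull ℝ {y, a, b} := by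
  rw [convexHull_insert (Set.insert_nonempty _ _), convexHull_pair, mem_convexJoin]
  rintro ⟨_, rfl, w, hw, hx⟩
  have hws : w ∈ s :=
    affineSpan_pair_le_of_mem_of_mem ha hb (mem_segment_iff_wbtw.1 hw).mem_affineSpan
  exact h.not_wSameSide ((mem_segment_iff_wbtw.1 hx).wSameSide₂₁ hws)

theorem disjoint_openSegment (h : s.SOppSide x y) (ha : a ∈ s) (hb : b ∈ s) :
    Disjoint (openSegment ℝ a x) (openSegment ℝ b y) := by
  refine Set.disjoint_left.2 fun q hqx hqy => h.not_sSameSide ?_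
  exact (sSameSide_of_mem_openSegment ha h.left_notMem hqx).symm.trans
    (sSameSide_of_mem_openSegment hb h.right_notMem hqy)

end SOppSide

end AffineSubspace

theorem collinear_of_mem_openSegment_of_mem_openSegment (hx : p ∈ openSegment ℝ a x)
    (hy : p ∈ openSegment ℝ a y) : Collinear ℝ {a, x, y} := by
  by_cases hpa : p = a
  · subst hpa
    rw [left_mem_openSegment_iff.1 hx, Set.insert_eq_of_mem (Set.mem_insert _ _)]
    exact collinear_pair ℝ _ _
  have hmem : ∀ {z}, p ∈ openSegment ℝ a z → z ∈ line[ℝ, a, p] := fun hz =>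
    (wbtw_of_mem_openSegment hz).collinear.mem_affineSpan_of_mem_of_ne
      (by simp) (by simp) (by simp) (Ne.symm hpa)
  exact collinear_triple_of_mem_affineSpan_pair (left_mem_affineSpan_pair ℝ a p)
    (hmem hx) (hmem hy)

theorem disjoint_openSegment_of_notMem_affineSpan (ha : a ∉ line[ℝ, x, y]) (hxy : x ≠ y) :
    Disjoint (openSegment ℝ a x) (openSegment ℝ a y) := by
  refine Set.disjoint_left.2 fun p hx hy => ha ?_
  exact (collinear_of_mem_openSegment_of_mem_openSegment hx hy).mem_affineSpan_of_mem_of_ne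
    (by simp) (by simp) (by simp) hxy

end Sides

section Quadrilateral

variable {V : Type*} [AddCommGroup V] [Module ℝ V] {u v s t : V}

theorem notMem_convexHull_diff_of_sOppSide_diagonals (hL : line[ℝ, s, t].SOppSide u v)
    (hM : line[ℝ, u, v].SOppSide s t) :
    ∀ z ∈ ({u, s, v, t} : Set V), z ∉ convexHull ℝ (({u, s, v, t} : Set V) \ {z}) := by
  have hs := left_mem_affineSpan_pair ℝ s t
  have ht := right_mem_affineSpan_pair ℝ s t
  have hu := left_mem_affineSpan_pair ℝ u v
  have hv := right_mem_affineSpan_pair ℝ u v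
  intro z hz
  simp only [Set.mem_insert_iff, Set.mem_singleton_iff] at hz
  rcases hz with rfl | rfl | rfl | rfl
  · refine fun h => hL.notMem_convexHull_triple hs ht (convexHull_mono ?_ h)
    simp [Set.insert_subset_iff]
  · refine fun h => hM.notMem_convexHull_triple hu hv (convexHull_mono ?_ h)
    simp [Set.insert_subset_iff]
  · refine fun h => hL.symm.notMem_convexHull_triple hs ht (convexHull_mono ?_ h)
    simp [Set.insert_subset_iff]
  · refine fun h => hM.symm.notMem_convexHull_triple hu hv (convexHull_mono ?_ h)
    simp [Set.insert_subset_iff]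

theorem pairwise_disjoint_openSegment_sides_of_sOppSide_diagonals
    (hL : line[ℝ, s, t].SOppSide u v) (hM : line[ℝ, u, v].SOppSide s t) :
    [(s, u), (s, v), (t, v), (t, u)].Pairwise fun e₁ e₂ : V × V =>
      Disjoint (openSegment ℝ e₁.1 e₁.2) (openSegment ℝ e₂.1 e₂.2) := by
  have huv : u ≠ v := fun h => AffineSubspace.not_sOppSide_self _ _ (h ▸ hL)
  have hst : s ≠ t := fun h => AffineSubspace.not_sOppSide_self _ _ (h ▸ hM)
  have hs := left_mem_affineSpan_pair ℝ s t
  have ht := right_mem_affineSpan_pair ℝ s t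
  simp only [List.pairwise_cons, List.mem_cons, List.not_mem_nil, or_false, forall_eq_or_imp,
    forall_eq, IsEmpty.forall_iff, implies_true, List.Pairwise.nil, and_true]
  refine ⟨⟨?_, hL.disjoint_openSegment hs ht, ?_⟩,
    ⟨?_, hL.symm.disjoint_openSegment hs ht⟩, ?_⟩
  · exact disjoint_openSegment_of_notMem_affineSpan hM.left_notMem huv
  · rw [openSegment_symm ℝ s, openSegment_symm ℝ t]
    exact disjoint_openSegment_of_notMem_affineSpan hL.left_notMem hst
  · rw [openSegment_symm ℝ s, openSegment_symm ℝ t]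
    exact disjoint_openSegment_of_notMem_affineSpan hL.right_notMem hst
  · exact (disjoint_openSegment_of_notMem_affineSpan hM.right_notMem huv).symm

end Quadrilateral

theorem not_segsCross_of_disjoint {a b c d : Plane}
    (h : Disjoint (openSegment ℝ a b) (openSegment ℝ c d)) : ¬ segsCross a b c d :=
  fun ⟨_, hab, hcd⟩ => Set.disjoint_left.1 h hab hcd

/-- two segments crossing at a point interior to both form the
diagonals of a convex quadrilateral `u, s, v, t`; in particular the four points
are in convex position and the four side segments pairwise do not intersect. -/
theorem stmt0 (u v s t p : Plane)
    (hdistinct : List.Pairwise (· ≠ ·) [u, v, s, t])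
    (hcol : noThreeCollinear ({u, v, s, t} : Set Plane))
    (hp1 : p ∈ openSegment ℝ u v) (hp2 : p ∈ openSegment ℝ s t) :
    (∀ z ∈ ({u, s, v, t} : Set Plane),
        z ∉ convexHull ℝ (({u, s, v, t} : Set Plane) \ {z})) ∧
    List.Pairwise (fun e₁ e₂ : Plane × Plane => ¬ segsCross e₁.1 e₁.2 e₂.1 e₂.2)
      [(s, u), (s, v), (t, v), (t, u)] := by
  simp only [List.pairwise_cons, List.mem_cons, List.not_mem_nil, or_false, forall_eq_or_imp,
    forall_eq, IsEmpty.forall_iff, implies_true, List.Pairwise.nil, and_true] at hdistinct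
  obtain ⟨⟨huv, hus, hut⟩, ⟨hvs, -⟩, hst⟩ := hdistinct
  have hu : u ∉ line[ℝ, s, t] := fun h =>
    hcol u (by simp) s (by simp) t (by simp) hus hut hst (collinear_insert_of_mem_affineSpan_pair h)
  have hs : s ∉ line[ℝ, u, v] := fun h =>
    hcol s (by simp) u (by simp) v (by simp) hus.symm hvs.symm huv
      (collinear_insert_of_mem_affineSpan_pair h)
  have hL := AffineSubspace.sOppSide_of_mem_openSegment hp1
    (wbtw_of_mem_openSegment hp2).mem_affineSpan hu
  have hM := AffineSubspace.sOppSide_of_mem_openSegment hp2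
    (wbtw_of_mem_openSegment hp1).mem_affineSpan hs
  exact ⟨notMem_convexHull_diff_of_sOppSide_diagonals hL hM,
    (pairwise_disjoint_openSegment_sides_of_sOppSide_diagonals hL hM).imp
      not_segsCross_of_disjoint⟩

end
end

section
/- Let V be a set of n planar points, no three collinear, angle-bounded by ε, and let x be a permutation of V whose tour C(x) contains intersecting edges {x_{i−1},x_i} and {x_j,x_{j+1}} (1 ≤ i < j ≤ n). Let y = inv_{i,j}[x] be the inversion replacing these two intersecting edges by the two non-intersecting edges {x_{i−1},x_j} and {x_i,x_{j+1}}. Then f(x) − f(y) > 2·d_min·(1 − cos ε)/cos ε, where d_min is the minimum Euclidean distance between any two points of V. -/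
noncomputable section
open Real EuclideanGeometry MeasureTheory
open scoped Classical ENNReal

/-!
If the old edges `[a, b]` and `[c, d]` cross at `p`, projecting onto `ac` in the triangle `a p c`
gives `|ac| = |ap| cos ∠a + |cp| cos ∠c < (|ap| + |cp|) cos ε`, and likewise for `bd`. Hence the
new edges have total length `T < S cos ε`, where `S = |ab| + |cd|`. Since `T ≥ 2 d_min`, this gives
`S > 2 d_min / cos ε` and a gain `S - T > (1 - cos ε) S > 2 d_min (1 - cos ε) / cos ε`. The
inversion only reverses the edges strictly between the two replaced ones, so no other edge length
changes. Crossing edges cannot share an endpoint, as they would then span a zero angle.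
-/

theorem sbtw_of_mem_openSegment {E : Type*} [NormedAddCommGroup E] [NormedSpace ℝ E]
    {a b p : E} (hab : a ≠ b) (h : p ∈ openSegment ℝ a b) : Sbtw ℝ a p b :=
  ⟨mem_segment_iff_wbtw.1 (openSegment_subset_segment ℝ a b h),
    fun hpa => hab (left_mem_openSegment_iff.1 (hpa ▸ h)),
    fun hpb => hab (right_mem_openSegment_iff.1 (hpb ▸ h))⟩

section Geometry

variable {V P : Type*} [NormedAddCommGroup V] [InnerProductSpace ℝ V] [MetricSpace P]
  [NormedAddTorsor V P]

theorem angle_eq_zero_of_sbtw_of_sbtw {a b c p : P} (hb : Sbtw ℝ a p b) (hc : Sbtw ℝ a p c) :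
    ∠ b a c = 0 := by
  rw [← hb.angle_eq_left, ← hc.angle_eq_right, angle_self_of_ne hb.ne_left]

theorem dist_eq_dist_mul_cos_add_dist_mul_cos {a c : P} (p : P) (hac : a ≠ c) :
    dist a c = dist a p * cos (∠ p a c) + dist c p * cos (∠ p c a) := by
  have hA := dist_sq_eq_dist_sq_add_dist_sq_sub_two_mul_dist_mul_dist_mul_cos_angle p a c
  have hC := dist_sq_eq_dist_sq_add_dist_sq_sub_two_mul_dist_mul_dist_mul_cos_angle p c a
  have hpos : 0 < dist a c := dist_pos.2 hac
  rw [dist_comm p a, dist_comm p c, dist_comm c a] at *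
  nlinarith

theorem dist_lt_dist_add_dist_mul_cos {a c p : P} {ε : ℝ} (hpa : p ≠ a) (hac : a ≠ c)
    (hε : 0 ≤ ε) (ha : ε < ∠ p a c) (hc : ε < ∠ p c a) :
    dist a c < (dist a p + dist c p) * cos ε := by
  have cos_lt {θ : ℝ} (hθ : ε < θ) (hθπ : θ ≤ π) : cos θ < cos ε :=
    cos_lt_cos_of_nonneg_of_le_pi hε hθπ hθ
  have ha' := cos_lt ha (angle_le_pi _ _ _)
  have hc' := cos_lt hc (angle_le_pi _ _ _)
  have hap : 0 < dist a p := dist_pos.2 hpa.symm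
  rw [dist_eq_dist_mul_cos_add_dist_mul_cos p hac]
  nlinarith [dist_nonneg (x := c) (y := p)]

theorem Sbtw.dist_add_dist_lt_mul_cos {a b c d p : P} {ε : ℝ} (hab : Sbtw ℝ a p b)
    (hcd : Sbtw ℝ c p d) (hac : a ≠ c) (hbd : b ≠ d) (hε : 0 ≤ ε)
    (ha : ε < ∠ b a c) (hb : ε < ∠ a b d) (hc : ε < ∠ d c a) (hd : ε < ∠ c d b) :
    dist a c + dist b d < (dist a b + dist c d) * cos ε := by
  rw [← hab.angle_eq_left] at ha
  rw [← hab.symm.angle_eq_left] at hb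
  rw [← hcd.angle_eq_left] at hc
  rw [← hcd.symm.angle_eq_left] at hd
  have hac' := dist_lt_dist_add_dist_mul_cos hab.ne_left hac hε ha hc
  have hbd' := dist_lt_dist_add_dist_mul_cos hab.ne_right hbd hε hb hd
  rw [← hab.wbtw.dist_add_dist, ← hcd.wbtw.dist_add_dist]
  rw [dist_comm b p, dist_comm d p] at hbd'
  linarith

theorem Sbtw.dist_add_dist_add_lt_dist_add_dist {a b c d p : P} {ε m : ℝ} (hab : Sbtw ℝ a p b)
    (hcd : Sbtw ℝ c p d) (hac : a ≠ c) (hbd : b ≠ d) (hε : 0 ≤ ε) (hε' : ε < π / 2)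
    (ha : ε < ∠ b a c) (hb : ε < ∠ a b d) (hc : ε < ∠ d c a) (hd : ε < ∠ c d b)
    (hm : m ≤ dist a c) (hm' : m ≤ dist b d) :
    dist a c + dist b d + 2 * m * (1 - cos ε) / cos ε < dist a b + dist c d := by
  have hcross := hab.dist_add_dist_lt_mul_cos hcd hac hbd hε ha hb hc hd
  have hcos : 0 < cos ε := cos_pos_of_mem_Ioo ⟨by linarith [pi_pos], hε'⟩
  have hcos' : cos ε ≤ 1 := cos_le_one ε
  set S := dist a b + dist c d
  set T := dist a c + dist b d
  have hS : 2 * m / cos ε < S := by rw [div_lt_iff₀ hcos]; linarith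
  calc T + 2 * m * (1 - cos ε) / cos ε = T + (2 * m / cos ε) * (1 - cos ε) := by ring
    _ ≤ T + S * (1 - cos ε) := by gcongr
    _ < S := by linarith

end Geometry

theorem segsCross.exists_sbtw {a b c d : Plane} (h : segsCross a b c d) (hab : a ≠ b)
    (hcd : c ≠ d) : ∃ p, Sbtw ℝ a p b ∧ Sbtw ℝ c p d :=
  let ⟨p, hp, hp'⟩ := h
  ⟨p, sbtw_of_mem_openSegment hab hp, sbtw_of_mem_openSegment hcd hp'⟩

section Indices

variable {n : ℕ}

theorem val_nxt (k : Fin n) : (nxt k).val = if k.val + 1 = n then 0 else k.val + 1 := by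
  have := k.2
  split_ifs with h
  · simp [nxt, h]
  · exact Nat.mod_eq_of_lt (by omega)

theorem val_prv (k : Fin n) : (prv k).val = if k.val = 0 then n - 1 else k.val - 1 := by
  have := k.2
  split_ifs with h
  · simp only [prv, h, zero_add]; exact Nat.mod_eq_of_lt (by omega)
  · simp only [prv]
    rw [show k.val + (n - 1) = k.val - 1 + n by omega, Nat.add_mod_right]
    exact Nat.mod_eq_of_lt (by omega)

theorem nxt_prv (k : Fin n) : nxt (prv k) = k := by
  have := k.2
  ext
  simp only [val_nxt, val_prv]
  split_ifs <;> omega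

/-- Reversing the positions `i, …, j` reverses the edges `k ∈ [i, j)` among themselves:
edge `k` of `invop i j x` is edge `i + j - 1 - k` of `x`, traversed backwards. -/
def edgeReflect (i j k : Fin n) : Fin n :=
  if h : i.val ≤ k.val ∧ k.val < j.val then ⟨i.val + j.val - 1 - k.val, by omega⟩ else k

theorem edgeReflect_involutive (i j : Fin n) : Function.Involutive (edgeReflect i j) := by
  intro k
  unfold edgeReflect
  split_ifs <;> ext <;> simp only at * <;> omega

variable {α : Type*} {i j : Fin n}

theorem invop_apply_of_mem (x : Fin n → α) (hij : i ≤ j) {p q : Fin n}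
    (hp : i.val ≤ p.val ∧ p.val ≤ j.val) (hq : q.val = i.val + j.val - p.val) :
    invop i j x p = x q := by
  simp only [invop, min_eq_left hij, max_eq_right hij, dif_pos hp]
  exact congrArg x (Fin.ext hq.symm)

theorem invop_apply_of_not_mem (x : Fin n → α) (hij : i ≤ j) {p : Fin n}
    (hp : ¬(i.val ≤ p.val ∧ p.val ≤ j.val)) : invop i j x p = x p := by
  simp only [invop, min_eq_left hij, max_eq_right hij, dif_neg hp]

theorem dist_invop_apply_nxt [PseudoMetricSpace α] (x : Fin n → α) (hij : i < j) {k : Fin n}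
    (hki : k ≠ prv i) (hkj : k ≠ j) :
    dist (invop i j x k) (invop i j x (nxt k)) =
      dist (x (edgeReflect i j k)) (x (nxt (edgeReflect i j k))) := by
  have hj := j.2
  have hij' : i.val < j.val := hij
  rw [Ne, Fin.ext_iff, val_prv] at hki
  rw [Ne, Fin.ext_iff] at hkj
  have hnk := val_nxt k
  by_cases hk : i.val ≤ k.val ∧ k.val < j.val
  · set r : Fin n := ⟨i.val + j.val - 1 - k.val, by omega⟩
    have hr : r.val = i.val + j.val - 1 - k.val := rfl
    have hnk' : (nxt k).val = k.val + 1 := by rw [hnk, if_neg (by omega)]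
    have hnr : (nxt r).val = i.val + j.val - k.val := by rw [val_nxt, if_neg (by omega)]; omega
    rw [show edgeReflect i j k = r from dif_pos hk,
      invop_apply_of_mem x hij.le (p := k) (q := nxt r) (by omega) (by omega),
      invop_apply_of_mem x hij.le (p := nxt k) (q := r) (by omega) (by omega), dist_comm]
  · rw [show edgeReflect i j k = k from dif_neg hk, invop_apply_of_not_mem x hij.le (by omega),
      invop_apply_of_not_mem x hij.le]
    split_ifs at hki hnk <;> omega

end Indices

theorem fitness_sub_fitness_invop {n : ℕ} (x : Fin n → Plane) {i j : Fin n} (hij : i < j)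
    (hji : prv i ≠ j) :
    fitness x - fitness (invop i j x) =
      dist (x (prv i)) (x i) + dist (x j) (x (nxt j)) -
        (dist (x (prv i)) (x j) + dist (x i) (x (nxt j))) := by
  have hj := j.2
  have hij' : i.val < j.val := hij
  have hpi := val_prv i
  have hnj := val_nxt j
  rw [Ne, Fin.ext_iff] at hji
  have hpi_out : ¬(i.val ≤ (prv i).val ∧ (prv i).val ≤ j.val) := by split_ifs at hpi <;> omega
  have hnj_out : ¬(i.val ≤ (nxt j).val ∧ (nxt j).val ≤ j.val) := by
    split_ifs at hpi hnj <;> omega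
  have hσ : fitness x = ∑ k, dist (x (edgeReflect i j k)) (x (nxt (edgeReflect i j k))) :=
    ((edgeReflect_involutive i j).bijective.sum_comp fun k => dist (x k) (x (nxt k))).symm
  rw [hσ, fitness, ← Finset.sum_sub_distrib, Fintype.sum_eq_add (prv i) j (by omega)
      fun k hk => by rw [dist_invop_apply_nxt x hij hk.1 hk.2, sub_self],
    show edgeReflect i j (prv i) = prv i from dif_neg (by omega),
    show edgeReflect i j j = j from dif_neg (by omega), nxt_prv,
    invop_apply_of_not_mem x hij.le hpi_out, invop_apply_of_not_mem x hij.le hnj_out,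
    invop_apply_of_mem x hij.le (p := i) (q := j) (by omega) (by omega),
    invop_apply_of_mem x hij.le (p := j) (q := i) (by omega) (by omega)]
  ring

theorem stmt8_general (n : ℕ) (x : Fin n → Plane) (hinj : Function.Injective x)
    (ε : ℝ) (hε : 0 < ε) (hang : angleBounded ε (Set.range x))
    (dmin : ℝ) (hdmin : IsLeast (pairDists (Set.range x)) dmin)
    (i j : Fin n) (hij : i < j)
    (hne : Sym2.mk (x (prv i)) (x i) ≠ Sym2.mk (x j) (x (nxt j)))
    (hcross : segsCross (x (prv i)) (x i) (x j) (x (nxt j))) :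
    fitness x - fitness (invop i j x)
      > 2 * dmin * (1 - Real.cos ε) / Real.cos ε := by
  have hji : prv i ≠ j := fun h => hne (by rw [← h, nxt_prv])
  obtain ⟨hab, hac, hbc, hcd, hbd⟩ : x (prv i) ≠ x i ∧ x (prv i) ≠ x j ∧ x i ≠ x j ∧
      x j ≠ x (nxt j) ∧ x i ≠ x (nxt j) := by
    have := j.2
    have : i.val < j.val := hij
    simp only [Ne, hinj.eq_iff, Fin.ext_iff, val_prv, val_nxt] at hji ⊢
    split_ifs at hji ⊢ <;> omega
  obtain ⟨p, hapb, hcpd⟩ := hcross.exists_sbtw hab hcd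
  have hang' := fun {u v w} => hang (x u) ⟨u, rfl⟩ (x v) ⟨v, rfl⟩ (x w) ⟨w, rfl⟩
  have ha := hang' hab.symm hbc hac
  have had : x (prv i) ≠ x (nxt j) := fun h => by
    have := ha.1
    rw [angle_eq_zero_of_sbtw_of_sbtw hapb (h ▸ hcpd.symm)] at this
    linarith
  have hε' : ε < π / 2 := by linarith [angle_nonneg (x i) (x (prv i)) (x j)]
  have hdist {u v} (huv : x u ≠ x v) : dmin ≤ dist (x u) (x v) :=
    hdmin.2 ⟨_, ⟨u, rfl⟩, _, ⟨v, rfl⟩, huv, rfl⟩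
  have hgain := hapb.dist_add_dist_add_lt_dist_add_dist hcpd hac hbd hε.le hε' ha.1
    (hang' hab had hbd).1 (hang' hcd.symm had.symm hac.symm).1 (hang' hcd hbc.symm hbd.symm).1
    (hdist hac) (hdist hbd)
  rw [fitness_sub_fitness_invop x hij hji]
  linarith

/-- removing a pair of intersecting edges by an inversion improves
the fitness by more than `2·d_min·(1 - cos ε)/cos ε` on an angle-bounded
instance. -/
theorem stmt8 (n : ℕ) (x : Fin n → Plane) (hinj : Function.Injective x)
    (hcol : noThreeCollinear (Set.range x))
    (ε : ℝ) (hε : 0 < ε) (hang : angleBounded ε (Set.range x))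
    (dmin : ℝ) (hdmin : IsLeast (pairDists (Set.range x)) dmin)
    (i j : Fin n) (hij : i < j)
    (hne : Sym2.mk (x (prv i)) (x i) ≠ Sym2.mk (x j) (x (nxt j)))
    (hcross : segsCross (x (prv i)) (x i) (x j) (x (nxt j))) :
    fitness x - fitness (invop i j x)
      > 2 * dmin * (1 - Real.cos ε) / Real.cos ε :=
  stmt8_general n x hinj ε hε hang dmin hdmin i j hij hne hcross
end
end

section
/- Let ε ∈ (0, π/2) and let θ₁, θ₂ be angles with ε ≤ θ₁, θ₂ and θ₁ + θ₂ < π. Then (sin θ₁ + sin θ₂)/sin(θ₁ + θ₂) ≥ 2 sin ε / sin(2ε) = 1/cos ε. Consequently, in any nondegenerate triangle with vertices s, u, p whose interior angles at s and at u are each at least ε, one has d(u,p) + d(s,p) ≥ d(s,u)/cos ε > d(s,u). -/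
/-!
Writing `θ₁ = S + D`, `θ₂ = S - D` turns the ratio `(sin θ₁ + sin θ₂) / sin (θ₁ + θ₂)` into
`cos D / cos S`. The angle constraints give `|D| + ε ≤ S < π / 2`, hence
`cos S ≤ cos (|D| + ε) ≤ cos D * cos ε`, which is the bound `1 / cos ε`. For a triangle, the law
of sines and the angle sum express `d(u,p) + d(s,p)` as `d(s,u)` times exactly this ratio, with
`θ₁, θ₂` the angles at `s` and `u`.
-/

noncomputable section
open Real EuclideanGeometry MeasureTheory
open scoped Classical ENNReal

theorem Real.cos_le_cos_mul_cos_of_abs_add_le {S D ε : ℝ} (hε : 0 ≤ ε) (h : |D| + ε ≤ S)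
    (hS : S ≤ π) : cos S ≤ cos D * cos ε := by
  have hsinD : 0 ≤ sin |D| := sin_nonneg_of_nonneg_of_le_pi (abs_nonneg D) (by linarith)
  have hsinε : 0 ≤ sin ε := sin_nonneg_of_nonneg_of_le_pi hε (by linarith [abs_nonneg D])
  calc cos S ≤ cos (|D| + ε) := cos_le_cos_of_nonneg_of_le_pi (by positivity) hS h
    _ = cos D * cos ε - sin |D| * sin ε := by rw [cos_add, cos_abs]
    _ ≤ cos D * cos ε := sub_le_self _ (mul_nonneg hsinD hsinε)

theorem Real.one_div_cos_le_sin_add_sin_div_sin_add {ε θ₁ θ₂ : ℝ} (hε0 : 0 < ε)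
    (hε : ε < π / 2) (h₁ : ε ≤ θ₁) (h₂ : ε ≤ θ₂) (hsum : θ₁ + θ₂ < π) :
    1 / cos ε ≤ (sin θ₁ + sin θ₂) / sin (θ₁ + θ₂) := by
  set S := (θ₁ + θ₂) / 2 with hS
  set D := (θ₁ - θ₂) / 2 with hD
  have hsinS : 0 < sin S := sin_pos_of_pos_of_lt_pi (by linarith) (by linarith)
  have hcosS : 0 < cos S := cos_pos_of_mem_Ioo ⟨by linarith, by linarith⟩
  have hcosε : 0 < cos ε := cos_pos_of_mem_Ioo ⟨by linarith, hε⟩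
  have hDS : |D| + ε ≤ S := by
    have : |D| ≤ S - ε := abs_le.2 ⟨by linarith, by linarith⟩
    linarith
  have hratio : (sin θ₁ + sin θ₂) / sin (θ₁ + θ₂) = cos D / cos S := by
    rw [sin_add_sin, ← hS, ← hD, show θ₁ + θ₂ = 2 * S by ring, sin_two_mul]
    field_simp
  rw [hratio, div_le_div_iff₀ hcosε hcosS, one_mul]
  exact cos_le_cos_mul_cos_of_abs_add_le hε0.le hDS (by linarith)

theorem Real.two_mul_sin_div_sin_two_mul {x : ℝ} (hx : sin x ≠ 0) :
    2 * sin x / sin (2 * x) = 1 / cos x := by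
  rw [sin_two_mul]
  by_cases hc : cos x = 0
  · simp [hc]
  · field_simp

section Triangle

variable {V P : Type*} [NormedAddCommGroup V] [InnerProductSpace ℝ V] [MetricSpace P]
  [NormedAddTorsor V P]

theorem EuclideanGeometry.angle_add_angle_eq_pi_sub_angle {s u : P} (p : P) (hsu : s ≠ u) :
    ∠ u s p + ∠ s u p = π - ∠ s p u := by
  have := angle_add_angle_add_angle_eq_pi p hsu.symm
  rw [angle_comm u p s, angle_comm p s u] at this
  linarith

theorem EuclideanGeometry.dist_add_dist_eq_mul_sin_add_sin_div_sin_add {s u p : P}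
    (h : ¬ Collinear ℝ ({s, u, p} : Set P)) :
    dist u p + dist s p =
      dist s u * ((sin (∠ u s p) + sin (∠ s u p)) / sin (∠ u s p + ∠ s u p)) := by
  have hsin_sum : sin (∠ u s p + ∠ s u p) = sin (∠ s p u) := by
    rw [angle_add_angle_eq_pi_sub_angle p (ne₁₂_of_not_collinear h), sin_pi_sub]
  have hsin_p : 0 < sin (∠ s p u) := sin_pos_of_not_collinear (by rwa [Set.pair_comm p u])
  have hlaw_s := law_sin s p u
  have hlaw_u := law_sin p u s
  rw [angle_comm p u s] at hlaw_u
  rw [dist_comm p u, dist_comm u s] at *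
  rw [hsin_sum, mul_div_assoc', eq_div_iff hsin_p.ne']
  linear_combination hlaw_s - hlaw_u

theorem EuclideanGeometry.dist_div_cos_le_dist_add_dist {ε : ℝ} {s u p : P} (hε0 : 0 < ε)
    (hε : ε < π / 2) (h : ¬ Collinear ℝ ({s, u, p} : Set P)) (hs : ε ≤ ∠ u s p)
    (hu : ε ≤ ∠ s u p) : dist s u / cos ε ≤ dist u p + dist s p := by
  have hsum : ∠ u s p + ∠ s u p < π := by
    rw [angle_add_angle_eq_pi_sub_angle p (ne₁₂_of_not_collinear h)]
    linarith [angle_pos_of_not_collinear (show ¬ Collinear ℝ ({s, p, u} : Set P) by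
      rwa [Set.pair_comm p u])]
  rw [dist_add_dist_eq_mul_sin_add_sin_div_sin_add h, div_eq_mul_one_div]
  exact mul_le_mul_of_nonneg_left
    (one_div_cos_le_sin_add_sin_div_sin_add hε0 hε hs hu hsum) dist_nonneg

end Triangle

/-- the trigonometric estimate
`(sin θ₁ + sin θ₂)/sin(θ₁+θ₂) ≥ 2 sin ε / sin 2ε = 1/cos ε`, and its consequence
for nondegenerate triangles whose angles at `s` and `u` are at least `ε`. -/
theorem stmt9 (ε θ₁ θ₂ : ℝ) (hε0 : 0 < ε) (hε : ε < Real.pi / 2)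
    (h1 : ε ≤ θ₁) (h2 : ε ≤ θ₂) (hsum : θ₁ + θ₂ < Real.pi) :
    ((Real.sin θ₁ + Real.sin θ₂) / Real.sin (θ₁ + θ₂)
        ≥ 2 * Real.sin ε / Real.sin (2 * ε) ∧
      2 * Real.sin ε / Real.sin (2 * ε) = 1 / Real.cos ε) ∧
    (∀ s u p : Plane, ¬ Collinear ℝ ({s, u, p} : Set Plane) →
      ε ≤ ∠ u s p → ε ≤ ∠ s u p →
      dist u p + dist s p ≥ dist s u / Real.cos ε ∧
        dist s u / Real.cos ε > dist s u) := by
  have hcos : 0 < cos ε := cos_pos_of_mem_Ioo ⟨by linarith, hε⟩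
  have hcos_lt_one : cos ε < 1 := by
    simpa using cos_lt_cos_of_nonneg_of_le_pi le_rfl (by linarith) hε0
  have hratio : 2 * sin ε / sin (2 * ε) = 1 / cos ε :=
    two_mul_sin_div_sin_two_mul (sin_pos_of_pos_of_lt_pi hε0 (by linarith)).ne'
  refine ⟨⟨hratio ▸ one_div_cos_le_sin_add_sin_div_sin_add hε0 hε h1 h2 hsum, hratio⟩,
    fun s u p h hs hu => ⟨dist_div_cos_le_dist_add_dist hε0 hε h hs hu, ?_⟩⟩
  have hsu : 0 < dist s u := dist_pos.2 (ne₁₂_of_not_collinear h)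
  exact (lt_div_iff₀ hcos).2 (mul_lt_of_lt_one_right hsu hcos_lt_one)

end
end
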